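/- Let 0 < m < k, let J, N be positive integers, Δx > 0, Δt > 0, and ξ > 0. For j = −1, …, J let Λⱼ = diag(Λ⁺ⱼ, −Λ⁻ⱼ) be diagonal matrices with Λ⁺ⱼ ∈ ℝ^{m×m} and Λ⁻ⱼ ∈ ℝ^{(k−m)×(k−m)} diagonal with strictly positive diagonal entries, let Πⱼ ∈ ℝ^{k×k} for j = 0, …, J−1, and let Pⱼ = diag(P⁺ⱼ, P⁻ⱼ) for j = −1, …, J be diagonal matrices with strictly positive diagonal entries. Let K, M ∈ ℝ^{k×k} with M diagonal, and let bⁿ ∈ ℝ^k for n = 0, …, N. For n = 0, …, N let Wⱼⁿ ∈ ℝ^k (j = −1, …, J), written Wⱼⁿ = (W⁺ⱼⁿ, W⁻ⱼⁿ), evolve by the upwind split scheme: W̃⁺ⱼⁿ = W⁺ⱼⁿ − (Δt/Δx)·Λ⁺_{j−1}·(W⁺ⱼⁿ − W⁺_{j−1}ⁿ), W̃⁻ⱼⁿ = W⁻ⱼⁿ + (Δt/Δx)·Λ⁻_{j+1}·(W⁻_{j+1}ⁿ − W⁻ⱼⁿ), and Wⱼ^{n+1} = W̃ⱼⁿ −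 Δt·Πⱼ·W̃ⱼⁿ for j = 0, …, J−1, together with the discrete boundary conditions (W⁺₋₁ⁿ, W⁻_Jⁿ) = K·(W⁺_{J−1}ⁿ, W⁻₀ⁿ) + M·bⁿ for all n, with b⁰ = 0. Assume: (CFL) (Δt/Δx)·max over all j and all diagonal entries of |Λⱼ| is at most 1; (i) there is η > 0 such that for all j = 0, …, J−1 and v ∈ ℝ^k, vᵀΘⱼv ≥ η·vᵀPⱼv, where Θⱼ = diag( −Λ⁺_{j−1}·(P⁺_{j+1} − P⁺ⱼ)/Δx − ((Λ⁺ⱼ − Λ⁺_{j−1})/Δx)·P⁺_{j+1} , Λ⁻_{j+1}·(P⁻ⱼ − P⁻_{j−1})/Δx + ((Λ⁻_{j+1} − Λ⁻ⱼ)/Δx)·P⁻_{j−1} ); (ii) PⱼΠⱼ + ΠⱼᵀPⱼ − Δt·ΠⱼᵀPⱼΠⱼ is positive semi-definite for all j = 0, …, J−1; (iii) diag(Λ⁺_{J−1}P⁺_J, Λ⁻₀P⁻₋₁) − (1 + ξ)·Kᵀ·diag(Λ⁺₋₁P⁺₀, Λ⁻_JP⁻_{J−1})·K is positive semi-definite;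 (iv) ν > 0 satisfies cᵀMᵀ·diag(Λ⁺₋₁P⁺₀, Λ⁻_JP⁻_{J−1})·Mc ≤ ν·|c|² for all c ∈ ℝ^k. Then the discrete Lyapunov function Lⁿ = Δx·∑_{j=0}^{J−1} WⱼⁿᵀPⱼWⱼⁿ satisfies, for all n = 0, …, N−1, (L^{n+1} − Lⁿ)/Δt ≤ −η·Lⁿ + ν·(1 + 1/ξ)·max_{0≤s≤n} |bˢ|². -/

import Mathlib

open Matrix

/-- The block-diagonal matrix `diag(diagonal a, diagonal c)` built from the
diagonal entries `a` of the upper-left block and `c` of the lower-right block. -/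
def blkdiag {m km : ℕ} (a : Fin m → ℝ) (c : Fin km → ℝ) :
    Matrix (Fin m ⊕ Fin km) (Fin m ⊕ Fin km) ℝ :=
  Matrix.fromBlocks (Matrix.diagonal a) 0 0 (Matrix.diagonal c)

lemma blkdiag_eq {m km : ℕ} (a : Fin m → ℝ) (c : Fin km → ℝ) :
    blkdiag a c = Matrix.diagonal (Sum.elim a c) := by
  rw [blkdiag, Matrix.fromBlocks_diagonal]

lemma quad {ι : Type*} [Fintype ι] [DecidableEq ι] (d : ι → ℝ) (v w : ι → ℝ) :
    v ⬝ᵥ (Matrix.diagonal d *ᵥ w) = ∑ s, d s * (v s * w s) := by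
  simp [dotProduct, Matrix.mulVec_diagonal]
  exact Finset.sum_congr rfl fun s _ => by ring

lemma quadS {m km : ℕ} (a : Fin m → ℝ) (c : Fin km → ℝ) (v : Fin m ⊕ Fin km → ℝ) :
    v ⬝ᵥ (blkdiag a c *ᵥ v) =
      (∑ i, a i * (v (Sum.inl i) * v (Sum.inl i))) +
        ∑ i, c i * (v (Sum.inr i) * v (Sum.inr i)) := by
  rw [blkdiag_eq, quad, Fintype.sum_sum_type]
  simp

lemma sum_Icc_range (J : ℕ) (f : ℤ → ℝ) :
    ∑ j ∈ Finset.Icc (0:ℤ) ((J:ℤ)-1), f j = ∑ j ∈ Finset.range J, f (j:ℤ) := by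
  have h : Finset.Icc (0:ℤ) ((J:ℤ)-1) = (Finset.range J).image (fun n : ℕ => (n:ℤ)) := by
    ext x
    simp only [Finset.mem_Icc, Finset.mem_image, Finset.mem_range]
    constructor
    · rintro ⟨h1, h2⟩
      exact ⟨x.toNat, by omega, by omega⟩
    · rintro ⟨n, hn, rfl⟩
      omega
  rw [h, Finset.sum_image (fun a _ b _ h => by exact_mod_cast h)]

lemma dot_transpose {ι : Type*} [Fintype ι] (A : Matrix ι ι ℝ) (u x : ι → ℝ) :
    u ⬝ᵥ (Aᵀ *ᵥ x) = (A *ᵥ u) ⬝ᵥ x := by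
  rw [Matrix.dotProduct_mulVec, Matrix.vecMul_transpose]

lemma source_quad {ι : Type*} [Fintype ι] [DecidableEq ι] (P A : Matrix ι ι ℝ)
    (hP : Pᵀ = P) (t : ℝ) (u : ι → ℝ) :
    (u - t • (A *ᵥ u)) ⬝ᵥ (P *ᵥ (u - t • (A *ᵥ u))) =
      u ⬝ᵥ (P *ᵥ u) - t * (u ⬝ᵥ ((P * A + Aᵀ * P - t • (Aᵀ * P * A)) *ᵥ u)) := by
  have h1 : ∀ x : ι → ℝ, u ⬝ᵥ (Aᵀ *ᵥ x) = (A *ᵥ u) ⬝ᵥ x := fun x => dot_transpose A u x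
  have hsym : (A *ᵥ u) ⬝ᵥ (P *ᵥ u) = u ⬝ᵥ (P *ᵥ (A *ᵥ u)) := by
    rw [Matrix.dotProduct_mulVec u P, ← hP, Matrix.vecMul_transpose, hP,
      dotProduct_comm]
  simp only [Matrix.add_mulVec, Matrix.sub_mulVec, Matrix.smul_mulVec,
    Matrix.mulVec_smul, Matrix.mulVec_sub, sub_dotProduct, dotProduct_sub,
    smul_dotProduct, dotProduct_smul, dotProduct_add, smul_eq_mul,
    ← Matrix.mulVec_mulVec]
  rw [h1, h1, hsym]
  ring

lemma conv_ineq (t P x y : ℝ) (ht0 : 0 ≤ t) (ht1 : t ≤ 1) (hP : 0 ≤ P) :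
    P * ((x - t * (x - y)) * (x - t * (x - y))) ≤ P * (x * x) - t * P * (x * x - y * y) := by
  nlinarith [mul_nonneg hP (mul_nonneg (mul_nonneg ht0 (sub_nonneg.2 ht1)) (sq_nonneg (x - y)))]

lemma young_ineq (c d u w : ℝ) (hc : 0 < c) (hd : 0 ≤ d) :
    d * ((u + w) * (u + w)) ≤ (1 + c) * (d * (u * u)) + (1 + 1 / c) * (d * (w * w)) := by
  have key : c * (1 / c) = 1 := mul_one_div_cancel hc.ne'
  have key2 : c * (1 / c) * (d * (w * w)) = d * (w * w) := by rw [key]; ring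
  nlinarith [mul_nonneg hd (sq_nonneg (c * u - w)), hc, key2]

lemma young_quad {m km : ℕ} (c : ℝ) (hc : 0 < c) (a : Fin m → ℝ) (d : Fin km → ℝ)
    (ha : ∀ i, 0 ≤ a i) (hd : ∀ i, 0 ≤ d i) (u w : Fin m ⊕ Fin km → ℝ) :
    (u + w) ⬝ᵥ (blkdiag a d *ᵥ (u + w)) ≤
      (1 + c) * (u ⬝ᵥ (blkdiag a d *ᵥ u)) + (1 + 1 / c) * (w ⬝ᵥ (blkdiag a d *ᵥ w)) := by
  rw [blkdiag_eq, quad, quad, quad, Finset.mul_sum, Finset.mul_sum, ← Finset.sum_add_distrib]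
  refine Finset.sum_le_sum fun s _ => ?_
  have hds : 0 ≤ Sum.elim a d s := by cases s with
    | inl i => exact ha i
    | inr i => exact hd i
  have := young_ineq c (Sum.elim a d s) (u s) (w s) hc hds
  simpa [Pi.add_apply] using this

set_option maxHeartbeats 2000000 in
theorem discrete_iss_lyapunov_decay (m km J N : ℕ)
    (hm : 0 < m) (hkm : 0 < km) (hJ : 0 < J) (hN : 0 < N)
    (Δx Δt ξ η ν : ℝ) (hΔx : 0 < Δx) (hΔt : 0 < Δt) (hξ : 0 < ξ)
    (hη : 0 < η) (hν : 0 < ν)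
    (Λp Pp : ℤ → Fin m → ℝ) (Λm Pm : ℤ → Fin km → ℝ)
    (Pim : ℤ → Matrix (Fin m ⊕ Fin km) (Fin m ⊕ Fin km) ℝ)
    (K M : Matrix (Fin m ⊕ Fin km) (Fin m ⊕ Fin km) ℝ) (hM : M.IsDiag)
    (b : ℕ → Fin m ⊕ Fin km → ℝ) (hb0 : b 0 = 0)
    (hΛppos : ∀ j : ℤ, -1 ≤ j → j ≤ (J : ℤ) → ∀ i, 0 < Λp j i)
    (hΛmpos : ∀ j : ℤ, -1 ≤ j → j ≤ (J : ℤ) → ∀ i, 0 < Λm j i)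
    (hPppos : ∀ j : ℤ, -1 ≤ j → j ≤ (J : ℤ) → ∀ i, 0 < Pp j i)
    (hPmpos : ∀ j : ℤ, -1 ≤ j → j ≤ (J : ℤ) → ∀ i, 0 < Pm j i)
    -- the upwind split scheme
    (W Wtil : ℕ → ℤ → Fin m ⊕ Fin km → ℝ)
    (hplus : ∀ n : ℕ, n < N → ∀ j : ℤ, 0 ≤ j → j < (J : ℤ) → ∀ i : Fin m,
      Wtil n j (Sum.inl i) = W n j (Sum.inl i)
        - (Δt / Δx) * Λp (j - 1) i * (W n j (Sum.inl i) - W n (j - 1) (Sum.inl i)))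
    (hminus : ∀ n : ℕ, n < N → ∀ j : ℤ, 0 ≤ j → j < (J : ℤ) → ∀ i : Fin km,
      Wtil n j (Sum.inr i) = W n j (Sum.inr i)
        + (Δt / Δx) * Λm (j + 1) i * (W n (j + 1) (Sum.inr i) - W n j (Sum.inr i)))
    (hstep : ∀ n : ℕ, n < N → ∀ j : ℤ, 0 ≤ j → j < (J : ℤ) →
      W (n + 1) j = Wtil n j - Δt • (Pim j *ᵥ Wtil n j))
    -- discrete boundary conditions with disturbance
    (hBC : ∀ n : ℕ, n ≤ N →
      Sum.elim (fun i => W n (-1) (Sum.inl i)) (fun i => W n (J : ℤ) (Sum.inr i)) =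
        K *ᵥ Sum.elim (fun i => W n ((J : ℤ) - 1) (Sum.inl i))
            (fun i => W n 0 (Sum.inr i)) + M *ᵥ b n)
    -- CFL condition
    (hCFL : ∀ j : ℤ, -1 ≤ j → j ≤ (J : ℤ) →
      (∀ i, (Δt / Δx) * Λp j i ≤ 1) ∧ (∀ i, (Δt / Δx) * Λm j i ≤ 1))
    -- (i) discrete interior dissipativity
    (hdiss : ∀ j : ℤ, 0 ≤ j → j < (J : ℤ) → ∀ v : Fin m ⊕ Fin km → ℝ,
      η * (v ⬝ᵥ (blkdiag (Pp j) (Pm j) *ᵥ v)) ≤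
        v ⬝ᵥ (blkdiag
          (fun i => -Λp (j - 1) i * ((Pp (j + 1) i - Pp j i) / Δx)
            - ((Λp j i - Λp (j - 1) i) / Δx) * Pp (j + 1) i)
          (fun i => Λm (j + 1) i * ((Pm j i - Pm (j - 1) i) / Δx)
            + ((Λm (j + 1) i - Λm j i) / Δx) * Pm (j - 1) i) *ᵥ v))
    -- (ii) source matrix positive semi-definite
    (hsrc : ∀ j : ℤ, 0 ≤ j → j < (J : ℤ) → ∀ v : Fin m ⊕ Fin km → ℝ,
      0 ≤ v ⬝ᵥ ((blkdiag (Pp j) (Pm j) * Pim j + (Pim j)ᵀ * blkdiag (Pp j) (Pm j)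
          - Δt • ((Pim j)ᵀ * blkdiag (Pp j) (Pm j) * Pim j)) *ᵥ v))
    -- (iii) boundary matrix positive semi-definite
    (hbdry : ∀ v : Fin m ⊕ Fin km → ℝ,
      0 ≤ v ⬝ᵥ ((blkdiag (fun i => Λp ((J : ℤ) - 1) i * Pp (J : ℤ) i)
            (fun i => Λm 0 i * Pm (-1) i)
          - (1 + ξ) • (Kᵀ * blkdiag (fun i => Λp (-1) i * Pp 0 i)
              (fun i => Λm (J : ℤ) i * Pm ((J : ℤ) - 1) i) * K)) *ᵥ v))
    -- (iv) bound on the disturbance matrix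
    (hnu : ∀ c : Fin m ⊕ Fin km → ℝ,
      c ⬝ᵥ ((Mᵀ * blkdiag (fun i => Λp (-1) i * Pp 0 i)
          (fun i => Λm (J : ℤ) i * Pm ((J : ℤ) - 1) i) * M) *ᵥ c) ≤
        ν * ∑ i, (c i) ^ 2) :
    ∀ n : ℕ, n < N →
      ((Δx * ∑ j ∈ Finset.Icc (0 : ℤ) ((J : ℤ) - 1),
            W (n + 1) j ⬝ᵥ (blkdiag (Pp j) (Pm j) *ᵥ W (n + 1) j)) -
          (Δx * ∑ j ∈ Finset.Icc (0 : ℤ) ((J : ℤ) - 1),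
            W n j ⬝ᵥ (blkdiag (Pp j) (Pm j) *ᵥ W n j))) / Δt ≤
        -η * (Δx * ∑ j ∈ Finset.Icc (0 : ℤ) ((J : ℤ) - 1),
            W n j ⬝ᵥ (blkdiag (Pp j) (Pm j) *ᵥ W n j))
          + ν * (1 + 1 / ξ) *
              (Finset.range (n + 1)).sup' ⟨0, Finset.mem_range.mpr (Nat.succ_pos n)⟩
                (fun s => ∑ i, (b s i) ^ 2) := by
  intro n hn
  have hnN : n ≤ N := hn.le
  have hΔx' : Δx ≠ 0 := hΔx.ne'
  have hl : 0 < Δt / Δx := div_pos hΔt hΔx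
  rw [sum_Icc_range J (fun j => W (n + 1) j ⬝ᵥ (blkdiag (Pp j) (Pm j) *ᵥ W (n + 1) j)),
    sum_Icc_range J (fun j => W n j ⬝ᵥ (blkdiag (Pp j) (Pm j) *ᵥ W n j)),
    div_le_iff₀ hΔt]
  -- Step 1: the source step decreases the quadratic form
  have step1 : ∀ j ∈ Finset.range J,
      W (n + 1) ((j : ℤ)) ⬝ᵥ (blkdiag (Pp ((j : ℤ))) (Pm ((j : ℤ))) *ᵥ W (n + 1) ((j : ℤ))) ≤ Wtil n ((j : ℤ)) ⬝ᵥ (blkdiag (Pp ((j : ℤ))) (Pm ((j : ℤ))) *ᵥ Wtil n ((j : ℤ))) := by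
    intro j hj
    have hj1 : (0 : ℤ) ≤ (j : ℤ) := Int.natCast_nonneg j
    have hj2 : (j : ℤ) < (J : ℤ) := by exact_mod_cast Finset.mem_range.mp hj
    rw [hstep n hn (j : ℤ) hj1 hj2,
      source_quad (blkdiag (Pp (j : ℤ)) (Pm (j : ℤ))) (Pim (j : ℤ))
        (by rw [blkdiag_eq]; exact Matrix.diagonal_transpose _) Δt (Wtil n (j : ℤ))]
    have h0 := hsrc (j : ℤ) hj1 hj2 (Wtil n (j : ℤ))
    nlinarith [mul_nonneg hΔt.le h0]
  -- Step 2: the transport step, using convexity and the CFL condition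
  have step2 : ∀ j ∈ Finset.range J,
      Wtil n ((j : ℤ)) ⬝ᵥ (blkdiag (Pp ((j : ℤ))) (Pm ((j : ℤ))) *ᵥ Wtil n ((j : ℤ))) ≤ W n ((j : ℤ)) ⬝ᵥ (blkdiag (Pp ((j : ℤ))) (Pm ((j : ℤ))) *ᵥ W n ((j : ℤ))) - Δt / Δx * (∑ i, Λp ((j : ℤ) - 1) i * Pp ((j : ℤ)) i * (W n ((j : ℤ)) (Sum.inl i) * W n ((j : ℤ)) (Sum.inl i) - W n ((j : ℤ) - 1) (Sum.inl i) * W n ((j : ℤ) - 1) (Sum.inl i))) + Δt / Δx * (∑ i, Λm ((j : ℤ) + 1) i * Pm ((j : ℤ)) i * (W n ((j : ℤ) + 1) (Sum.inr i) * W n ((j : ℤ) + 1) (Sum.inr i) - W n ((j : ℤ)) (Sum.inr i) * W n ((j : ℤ)) (Sum.inr i))) := by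
    intro j hj
    have hj1 : (0 : ℤ) ≤ (j : ℤ) := Int.natCast_nonneg j
    have hj2 : (j : ℤ) < (J : ℤ) := by exact_mod_cast Finset.mem_range.mp hj
    rw [quadS, quadS]
    have hAs : (∑ i, Pp (j : ℤ) i * (Wtil n (j : ℤ) (Sum.inl i) * Wtil n (j : ℤ) (Sum.inl i)))
        ≤ ∑ i, (Pp (j : ℤ) i * (W n ((j : ℤ)) (Sum.inl i) * W n ((j : ℤ)) (Sum.inl i))
            - Δt / Δx * (Λp ((j : ℤ) - 1) i * Pp (j : ℤ) i * (W n ((j : ℤ)) (Sum.inl i) * W n ((j : ℤ)) (Sum.inl i) - W n ((j : ℤ) - 1) (Sum.inl i) * W n ((j : ℤ) - 1) (Sum.inl i)))) := by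
      refine Finset.sum_le_sum fun i _ => ?_
      rw [hplus n hn (j : ℤ) hj1 hj2 i]
      refine (conv_ineq (Δt / Δx * Λp ((j : ℤ) - 1) i) (Pp (j : ℤ) i)
        (W n (j : ℤ) (Sum.inl i)) (W n ((j : ℤ) - 1) (Sum.inl i))
        (mul_nonneg hl.le (hΛppos ((j : ℤ) - 1) (by omega) (by omega) i).le)
        ((hCFL ((j : ℤ) - 1) (by omega) (by omega)).1 i)
        (hPppos (j : ℤ) (by omega) (by omega) i).le).trans_eq (by ring)
    have hBs : (∑ i, Pm (j : ℤ) i * (Wtil n (j : ℤ) (Sum.inr i) * Wtil n (j : ℤ) (Sum.inr i)))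
        ≤ ∑ i, (Pm (j : ℤ) i * (W n ((j : ℤ)) (Sum.inr i) * W n ((j : ℤ)) (Sum.inr i))
            + Δt / Δx * (Λm ((j : ℤ) + 1) i * Pm (j : ℤ) i * (W n ((j : ℤ) + 1) (Sum.inr i) * W n ((j : ℤ) + 1) (Sum.inr i) - W n ((j : ℤ)) (Sum.inr i) * W n ((j : ℤ)) (Sum.inr i)))) := by
      refine Finset.sum_le_sum fun i _ => ?_
      rw [hminus n hn (j : ℤ) hj1 hj2 i]
      calc Pm (j : ℤ) i * ((W n (j : ℤ) (Sum.inr i)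
              + Δt / Δx * Λm ((j : ℤ) + 1) i * (W n ((j : ℤ) + 1) (Sum.inr i) - W n (j : ℤ) (Sum.inr i)))
            * (W n (j : ℤ) (Sum.inr i)
              + Δt / Δx * Λm ((j : ℤ) + 1) i * (W n ((j : ℤ) + 1) (Sum.inr i) - W n (j : ℤ) (Sum.inr i))))
          = Pm (j : ℤ) i * ((W n (j : ℤ) (Sum.inr i)
              - Δt / Δx * Λm ((j : ℤ) + 1) i * (W n (j : ℤ) (Sum.inr i) - W n ((j : ℤ) + 1) (Sum.inr i)))
            * (W n (j : ℤ) (Sum.inr i)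
              - Δt / Δx * Λm ((j : ℤ) + 1) i * (W n (j : ℤ) (Sum.inr i) - W n ((j : ℤ) + 1) (Sum.inr i)))) := by
            ring
        _ ≤ Pm (j : ℤ) i * (W n (j : ℤ) (Sum.inr i) * W n (j : ℤ) (Sum.inr i))
            - Δt / Δx * Λm ((j : ℤ) + 1) i * Pm (j : ℤ) i
              * (W n (j : ℤ) (Sum.inr i) * W n (j : ℤ) (Sum.inr i)
                - W n ((j : ℤ) + 1) (Sum.inr i) * W n ((j : ℤ) + 1) (Sum.inr i)) :=
            conv_ineq (Δt / Δx * Λm ((j : ℤ) + 1) i) (Pm (j : ℤ) i)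
              (W n (j : ℤ) (Sum.inr i)) (W n ((j : ℤ) + 1) (Sum.inr i))
              (mul_nonneg hl.le (hΛmpos ((j : ℤ) + 1) (by omega) (by omega) i).le)
              ((hCFL ((j : ℤ) + 1) (by omega) (by omega)).2 i)
              (hPmpos (j : ℤ) (by omega) (by omega) i).le
        _ = Pm (j : ℤ) i * (W n ((j : ℤ)) (Sum.inr i) * W n ((j : ℤ)) (Sum.inr i))
            + Δt / Δx * (Λm ((j : ℤ) + 1) i * Pm (j : ℤ) i * (W n ((j : ℤ) + 1) (Sum.inr i) * W n ((j : ℤ) + 1) (Sum.inr i) - W n ((j : ℤ)) (Sum.inr i) * W n ((j : ℤ)) (Sum.inr i))) := by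
            ring
    rw [Finset.sum_sub_distrib] at hAs
    rw [Finset.sum_add_distrib] at hBs
    rw [← Finset.mul_sum] at hAs hBs
    linarith [hAs, hBs]
  -- summing up
  have t1 : (∑ j ∈ Finset.range J, W (n + 1) ((j : ℤ)) ⬝ᵥ (blkdiag (Pp ((j : ℤ))) (Pm ((j : ℤ))) *ᵥ W (n + 1) ((j : ℤ)))) ≤ ∑ j ∈ Finset.range J, Wtil n ((j : ℤ)) ⬝ᵥ (blkdiag (Pp ((j : ℤ))) (Pm ((j : ℤ))) *ᵥ Wtil n ((j : ℤ))) := Finset.sum_le_sum step1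
  have t2 : (∑ j ∈ Finset.range J, Wtil n ((j : ℤ)) ⬝ᵥ (blkdiag (Pp ((j : ℤ))) (Pm ((j : ℤ))) *ᵥ Wtil n ((j : ℤ)))) ≤ ∑ j ∈ Finset.range J, (W n ((j : ℤ)) ⬝ᵥ (blkdiag (Pp ((j : ℤ))) (Pm ((j : ℤ))) *ᵥ W n ((j : ℤ))) - Δt / Δx * (∑ i, Λp ((j : ℤ) - 1) i * Pp ((j : ℤ)) i * (W n ((j : ℤ)) (Sum.inl i) * W n ((j : ℤ)) (Sum.inl i) - W n ((j : ℤ) - 1) (Sum.inl i) * W n ((j : ℤ) - 1) (Sum.inl i))) + Δt / Δx * (∑ i, Λm ((j : ℤ) + 1) i * Pm ((j : ℤ)) i * (W n ((j : ℤ) + 1) (Sum.inr i) * W n ((j : ℤ) + 1) (Sum.inr i) - W n ((j : ℤ)) (Sum.inr i) * W n ((j : ℤ)) (Sum.inr i)))) := Finset.sum_le_sum step2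
  have t3 : (∑ j ∈ Finset.range J, (W n ((j : ℤ)) ⬝ᵥ (blkdiag (Pp ((j : ℤ))) (Pm ((j : ℤ))) *ᵥ W n ((j : ℤ))) - Δt / Δx * (∑ i, Λp ((j : ℤ) - 1) i * Pp ((j : ℤ)) i * (W n ((j : ℤ)) (Sum.inl i) * W n ((j : ℤ)) (Sum.inl i) - W n ((j : ℤ) - 1) (Sum.inl i) * W n ((j : ℤ) - 1) (Sum.inl i))) + Δt / Δx * (∑ i, Λm ((j : ℤ) + 1) i * Pm ((j : ℤ)) i * (W n ((j : ℤ) + 1) (Sum.inr i) * W n ((j : ℤ) + 1) (Sum.inr i) - W n ((j : ℤ)) (Sum.inr i) * W n ((j : ℤ)) (Sum.inr i))))) = (∑ j ∈ Finset.range J, W n ((j : ℤ)) ⬝ᵥ (blkdiag (Pp ((j : ℤ))) (Pm ((j : ℤ))) *ᵥ W n ((j : ℤ)))) - Δt / Δx * (∑ j ∈ Finset.range J, ((∑ i, Λp ((j : ℤ) - 1) i * Pp ((j : ℤ)) i * (W n ((j : ℤ)) (Sum.inl i) * W n ((j : ℤ)) (Sum.inl i) - W n ((j : ℤ) - 1)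 (Sum.inl i) * W n ((j : ℤ) - 1) (Sum.inl i))) - (∑ i, Λm ((j : ℤ) + 1) i * Pm ((j : ℤ)) i * (W n ((j : ℤ) + 1) (Sum.inr i) * W n ((j : ℤ) + 1) (Sum.inr i) - W n ((j : ℤ)) (Sum.inr i) * W n ((j : ℤ)) (Sum.inr i))))) := by
    simp only [Finset.sum_add_distrib, Finset.sum_sub_distrib, ← Finset.mul_sum]
    ring
  -- telescoping / summation by parts
  have hG := Finset.sum_range_sub (fun jn : ℕ =>
      (∑ i, Λp ((jn : ℤ) - 1) i * Pp (jn : ℤ) i * (W n ((jn : ℤ) - 1) (Sum.inl i) * W n ((jn : ℤ) - 1) (Sum.inl i)))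
        - ∑ i, Λm (jn : ℤ) i * Pm ((jn : ℤ) - 1) i * (W n ((jn : ℤ)) (Sum.inr i) * W n ((jn : ℤ)) (Sum.inr i))) J
  push_cast at hG
  simp only [add_sub_cancel_right, zero_sub] at hG
  have tele : (∑ j ∈ Finset.range J, ((∑ i, Λp ((j : ℤ) - 1) i * Pp ((j : ℤ)) i * (W n ((j : ℤ)) (Sum.inl i) * W n ((j : ℤ)) (Sum.inl i) - W n ((j : ℤ) - 1) (Sum.inl i) * W n ((j : ℤ) - 1) (Sum.inl i))) - (∑ i, Λm ((j : ℤ) + 1) i * Pm ((j : ℤ)) i * (W n ((j : ℤ) + 1) (Sum.inr i) * W n ((j : ℤ) + 1) (Sum.inr i) - W n ((j : ℤ)) (Sum.inr i) * W n ((j : ℤ)) (Sum.inr i))))) = Δx * (∑ j ∈ Finset.range J, W n ((j : ℤ)) ⬝ᵥ (blkdiag (fun i => -Λp ((j : ℤ) - 1) i * ((Pp ((j : ℤ) + 1) i - Pp ((j : ℤ)) i) / Δx) - ((Λp ((j : ℤ)) i - Λp ((j : ℤ) - 1) i) / Δx) * Pp ((j : ℤ) + 1) i) (fun i => Λm ((j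 : ℤ) + 1) i * ((Pm ((j : ℤ)) i - Pm ((j : ℤ) - 1) i) / Δx) + ((Λm ((j : ℤ) + 1) i - Λm ((j : ℤ)) i) / Δx) * Pm ((j : ℤ) - 1) i) *ᵥ W n ((j : ℤ)))) + (((∑ i, Λp ((J : ℤ) - 1) i * Pp (J : ℤ) i * (W n ((J : ℤ) - 1) (Sum.inl i) * W n ((J : ℤ) - 1) (Sum.inl i))) - (∑ i, Λm (J : ℤ) i * Pm ((J : ℤ) - 1) i * (W n ((J : ℤ)) (Sum.inr i) * W n ((J : ℤ)) (Sum.inr i)))) - ((∑ i, Λp (-1) i * Pp 0 i * (W n (-1) (Sum.inl i) * W n (-1) (Sum.inl i))) - (∑ i, Λm 0 i * Pm (-1) i * (W n (0) (Sum.inr i) * W n (0) (Sum.inr i))))) := by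
    rw [← hG, Finset.mul_sum, ← Finset.sum_add_distrib]
    refine Finset.sum_congr rfl fun j hj => ?_
    rw [quadS]
    have hps : (∑ i, Λp ((j : ℤ) - 1) i * Pp (j : ℤ) i * (W n ((j : ℤ)) (Sum.inl i) * W n ((j : ℤ)) (Sum.inl i) - W n ((j : ℤ) - 1) (Sum.inl i) * W n ((j : ℤ) - 1) (Sum.inl i)))
        = Δx * (∑ i, (-Λp ((j : ℤ) - 1) i * ((Pp ((j : ℤ) + 1) i - Pp (j : ℤ) i) / Δx)
              - ((Λp (j : ℤ) i - Λp ((j : ℤ) - 1) i) / Δx) * Pp ((j : ℤ) + 1) i) * (W n ((j : ℤ)) (Sum.inl i) * W n ((j : ℤ)) (Sum.inl i)))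
          + ((∑ i, Λp (j : ℤ) i * Pp ((j : ℤ) + 1) i * (W n ((j : ℤ)) (Sum.inl i) * W n ((j : ℤ)) (Sum.inl i)))
              - ∑ i, Λp ((j : ℤ) - 1) i * Pp (j : ℤ) i * (W n ((j : ℤ) - 1) (Sum.inl i) * W n ((j : ℤ) - 1) (Sum.inl i))) := by
      rw [Finset.mul_sum, ← Finset.sum_sub_distrib, ← Finset.sum_add_distrib]
      refine Finset.sum_congr rfl fun i _ => ?_
      field_simp
      ring
    have hms : (∑ i, Λm ((j : ℤ) + 1) i * Pm (j : ℤ) i * (W n ((j : ℤ) + 1) (Sum.inr i) * W n ((j : ℤ) + 1) (Sum.inr i) - W n ((j : ℤ)) (Sum.inr i) * W n ((j : ℤ)) (Sum.inr i)))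
          + Δx * (∑ i, (Λm ((j : ℤ) + 1) i * ((Pm (j : ℤ) i - Pm ((j : ℤ) - 1) i) / Δx)
              + ((Λm ((j : ℤ) + 1) i - Λm (j : ℤ) i) / Δx) * Pm ((j : ℤ) - 1) i) * (W n ((j : ℤ)) (Sum.inr i) * W n ((j : ℤ)) (Sum.inr i)))
        = (∑ i, Λm ((j : ℤ) + 1) i * Pm (j : ℤ) i * (W n ((j : ℤ) + 1) (Sum.inr i) * W n ((j : ℤ) + 1) (Sum.inr i)))
            - ∑ i, Λm (j : ℤ) i * Pm ((j : ℤ) - 1) i * (W n ((j : ℤ)) (Sum.inr i) * W n ((j : ℤ)) (Sum.inr i)) := by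
      rw [Finset.mul_sum, ← Finset.sum_sub_distrib, ← Finset.sum_add_distrib]
      refine Finset.sum_congr rfl fun i _ => ?_
      field_simp
      ring
    linarith [hps, hms]
  rw [tele] at t3
  -- interior dissipativity
  have hm3 : η * (∑ j ∈ Finset.range J, W n ((j : ℤ)) ⬝ᵥ (blkdiag (Pp ((j : ℤ))) (Pm ((j : ℤ))) *ᵥ W n ((j : ℤ)))) ≤ ∑ j ∈ Finset.range J, W n ((j : ℤ)) ⬝ᵥ (blkdiag (fun i => -Λp ((j : ℤ) - 1) i * ((Pp ((j : ℤ) + 1) i - Pp ((j : ℤ)) i) / Δx) - ((Λp ((j : ℤ)) i - Λp ((j : ℤ) - 1) i) / Δx) * Pp ((j : ℤ) + 1) i) (fun i => Λm ((j : ℤ) + 1) i * ((Pm ((j : ℤ)) i - Pm ((j : ℤ) - 1) i) / Δx) + ((Λm ((j : ℤ) + 1) i - Λm ((j : ℤ)) i) / Δx) * Pm ((j : ℤ) - 1) i) *ᵥ W n ((j : ℤ))) := by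
    rw [Finset.mul_sum]
    refine Finset.sum_le_sum fun j hj => hdiss (j : ℤ) (Int.natCast_nonneg j)
      (by exact_mod_cast Finset.mem_range.mp hj) (W n (j : ℤ))
  -- boundary estimate
  have hz : (Sum.elim (fun i => W n ((J : ℤ) - 1) (Sum.inl i)) fun i => W n 0 (Sum.inr i)) ⬝ᵥ ((blkdiag (fun i => Λp ((J : ℤ) - 1) i * Pp (J : ℤ) i) fun i => Λm 0 i * Pm (-1) i) *ᵥ (Sum.elim (fun i => W n ((J : ℤ) - 1) (Sum.inl i)) fun i => W n 0 (Sum.inr i)))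
      = (∑ i, Λp ((J : ℤ) - 1) i * Pp (J : ℤ) i * (W n ((J : ℤ) - 1) (Sum.inl i) * W n ((J : ℤ) - 1) (Sum.inl i))) + (∑ i, Λm 0 i * Pm (-1) i * (W n (0) (Sum.inr i) * W n (0) (Sum.inr i))) := by
    simp only [quadS, Sum.elim_inl, Sum.elim_inr]
  have hyq : (Sum.elim (fun i => W n (-1) (Sum.inl i)) fun i => W n (J : ℤ) (Sum.inr i)) ⬝ᵥ ((blkdiag (fun i => Λp (-1) i * Pp 0 i) fun i => Λm (J : ℤ) i * Pm ((J : ℤ) - 1) i) *ᵥ (Sum.elim (fun i => W n (-1) (Sum.inl i)) fun i => W n (J : ℤ) (Sum.inr i)))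
      = (∑ i, Λp (-1) i * Pp 0 i * (W n (-1) (Sum.inl i) * W n (-1) (Sum.inl i))) + (∑ i, Λm (J : ℤ) i * Pm ((J : ℤ) - 1) i * (W n ((J : ℤ)) (Sum.inr i) * W n ((J : ℤ)) (Sum.inr i))) := by
    simp only [quadS, Sum.elim_inl, Sum.elim_inr]
  have hb1 := hbdry (Sum.elim (fun i => W n ((J : ℤ) - 1) (Sum.inl i)) fun i => W n 0 (Sum.inr i))
  rw [Matrix.sub_mulVec, dotProduct_sub, Matrix.smul_mulVec,
    dotProduct_smul, smul_eq_mul, ← Matrix.mulVec_mulVec, ← Matrix.mulVec_mulVec,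
    dot_transpose] at hb1
  have hbc := hBC n hnN
  have hyconv : (Sum.elim (fun i => W n (-1) (Sum.inl i)) fun i => W n (J : ℤ) (Sum.inr i)) ⬝ᵥ ((blkdiag (fun i => Λp (-1) i * Pp 0 i) fun i => Λm (J : ℤ) i * Pm ((J : ℤ) - 1) i) *ᵥ (Sum.elim (fun i => W n (-1) (Sum.inl i)) fun i => W n (J : ℤ) (Sum.inr i)))
      = ((K *ᵥ (Sum.elim (fun i => W n ((J : ℤ) - 1) (Sum.inl i)) fun i => W n 0 (Sum.inr i))) + (M *ᵥ b n)) ⬝ᵥ ((blkdiag (fun i => Λp (-1) i * Pp 0 i) fun i => Λm (J : ℤ) i * Pm ((J : ℤ) - 1) i) *ᵥ ((K *ᵥ (Sum.elim (fun i => W n ((J : ℤ) - 1) (Sum.inl i)) fun i => W n 0 (Sum.inr i))) + (M *ᵥ b n))) := by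
    rw [hbc]
  have hb2 := young_quad ξ hξ (fun i => Λp (-1) i * Pp 0 i)
    (fun i => Λm (J : ℤ) i * Pm ((J : ℤ) - 1) i)
    (fun i => (mul_pos (hΛppos (-1) (by omega) (by omega) i)
      (hPppos 0 (by omega) (by omega) i)).le)
    (fun i => (mul_pos (hΛmpos (J : ℤ) (by omega) (by omega) i)
      (hPmpos ((J : ℤ) - 1) (by omega) (by omega) i)).le)
    (K *ᵥ (Sum.elim (fun i => W n ((J : ℤ) - 1) (Sum.inl i)) fun i => W n 0 (Sum.inr i))) (M *ᵥ b n)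
  have hb3 : ((M *ᵥ b n) ⬝ᵥ ((blkdiag (fun i => Λp (-1) i * Pp 0 i) fun i => Λm (J : ℤ) i * Pm ((J : ℤ) - 1) i) *ᵥ (M *ᵥ b n))) ≤ ν * ∑ i, b n i ^ 2 := by
    have h := hnu (b n)
    rw [← Matrix.mulVec_mulVec, ← Matrix.mulVec_mulVec, dot_transpose] at h
    exact h
  have hb4 : (∑ i, b n i ^ 2) ≤ (Finset.range (n + 1)).sup' Finset.nonempty_range_add_one fun s => ∑ i, b s i ^ 2 :=
    Finset.le_sup' (fun s => ∑ i, b s i ^ 2) (Finset.self_mem_range_succ n)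
  have hc1 : (0 : ℝ) < 1 + 1 / ξ := by positivity
  have hm4 : -(ν * (1 + 1 / ξ) * ((Finset.range (n + 1)).sup' Finset.nonempty_range_add_one fun s => ∑ i, b s i ^ 2)) ≤ ((∑ i, Λp ((J : ℤ) - 1) i * Pp (J : ℤ) i * (W n ((J : ℤ) - 1) (Sum.inl i) * W n ((J : ℤ) - 1) (Sum.inl i))) - (∑ i, Λm (J : ℤ) i * Pm ((J : ℤ) - 1) i * (W n ((J : ℤ)) (Sum.inr i) * W n ((J : ℤ)) (Sum.inr i)))) - ((∑ i, Λp (-1) i * Pp 0 i * (W n (-1) (Sum.inl i) * W n (-1) (Sum.inl i))) - (∑ i, Λm 0 i * Pm (-1) i * (W n (0) (Sum.inr i) * W n (0) (Sum.inr i)))) := by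
    nlinarith [hb1, hb2, hb3, hb4, hz, hyq, hyconv,
      mul_le_mul_of_nonneg_left hb3 hc1.le,
      mul_le_mul_of_nonneg_left hb4 (by positivity : (0:ℝ) ≤ ν * (1 + 1 / ξ))]
  -- final assembly
  have main : (∑ j ∈ Finset.range J, W (n + 1) ((j : ℤ)) ⬝ᵥ (blkdiag (Pp ((j : ℤ))) (Pm ((j : ℤ))) *ᵥ W (n + 1) ((j : ℤ)))) ≤ (∑ j ∈ Finset.range J, W n ((j : ℤ)) ⬝ᵥ (blkdiag (Pp ((j : ℤ))) (Pm ((j : ℤ))) *ᵥ W n ((j : ℤ)))) - Δt / Δx * (Δx * (∑ j ∈ Finset.range J, W n ((j : ℤ)) ⬝ᵥ (blkdiag (fun i => -Λp ((j : ℤ) - 1) i * ((Pp ((j : ℤ) + 1) i - Pp ((j : ℤ)) i) / Δx) - ((Λp ((j : ℤ)) i - Λp ((j : ℤ) - 1) i) / Δx) * Pp ((j : ℤ) + 1) i) (fun i => Λm ((j : ℤ) + 1) i * ((Pm ((j : ℤ)) i - Pm ((j : ℤ) - 1) i) / Δx) + ((Λm ((j : ℤ) + 1) i - Λm ((j : ℤ))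 i) / Δx) * Pm ((j : ℤ) - 1) i) *ᵥ W n ((j : ℤ)))) + (((∑ i, Λp ((J : ℤ) - 1) i * Pp (J : ℤ) i * (W n ((J : ℤ) - 1) (Sum.inl i) * W n ((J : ℤ) - 1) (Sum.inl i))) - (∑ i, Λm (J : ℤ) i * Pm ((J : ℤ) - 1) i * (W n ((J : ℤ)) (Sum.inr i) * W n ((J : ℤ)) (Sum.inr i)))) - ((∑ i, Λp (-1) i * Pp 0 i * (W n (-1) (Sum.inl i) * W n (-1) (Sum.inl i))) - (∑ i, Λm 0 i * Pm (-1) i * (W n (0) (Sum.inr i) * W n (0) (Sum.inr i)))))) :=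
    (t1.trans t2).trans_eq t3
  have hm1 : Δx * (∑ j ∈ Finset.range J, W (n + 1) ((j : ℤ)) ⬝ᵥ (blkdiag (Pp ((j : ℤ))) (Pm ((j : ℤ))) *ᵥ W (n + 1) ((j : ℤ)))) ≤ Δx * ((∑ j ∈ Finset.range J, W n ((j : ℤ)) ⬝ᵥ (blkdiag (Pp ((j : ℤ))) (Pm ((j : ℤ))) *ᵥ W n ((j : ℤ)))) - Δt / Δx * (Δx * (∑ j ∈ Finset.range J, W n ((j : ℤ)) ⬝ᵥ (blkdiag (fun i => -Λp ((j : ℤ) - 1) i * ((Pp ((j : ℤ) + 1) i - Pp ((j : ℤ)) i) / Δx) - ((Λp ((j : ℤ)) i - Λp ((j : ℤ) - 1) i) / Δx) * Pp ((j : ℤ) + 1) i) (fun i => Λm ((j : ℤ) + 1) i * ((Pm ((j : ℤ)) i - Pm ((j : ℤ) - 1) i) / Δx) + ((Λm ((j : ℤ) + 1) i - Λm ((j : ℤ)) i) / Δx) * Pm ((j : ℤ) - 1) i) *ᵥ W n ((j : ℤ)))) + (((∑ i, Λp ((J : ℤ) - 1) i * Pp (J : ℤ) i * (W n ((J : ℤ)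 - 1) (Sum.inl i) * W n ((J : ℤ) - 1) (Sum.inl i))) - (∑ i, Λm (J : ℤ) i * Pm ((J : ℤ) - 1) i * (W n ((J : ℤ)) (Sum.inr i) * W n ((J : ℤ)) (Sum.inr i)))) - ((∑ i, Λp (-1) i * Pp 0 i * (W n (-1) (Sum.inl i) * W n (-1) (Sum.inl i))) - (∑ i, Λm 0 i * Pm (-1) i * (W n (0) (Sum.inr i) * W n (0) (Sum.inr i))))))) :=
    mul_le_mul_of_nonneg_left main hΔx.le
  have hm2 : Δx * ((∑ j ∈ Finset.range J, W n ((j : ℤ)) ⬝ᵥ (blkdiag (Pp ((j : ℤ))) (Pm ((j : ℤ))) *ᵥ W n ((j : ℤ)))) - Δt / Δx * (Δx * (∑ j ∈ Finset.range J, W n ((j : ℤ)) ⬝ᵥ (blkdiag (fun i => -Λp ((j : ℤ) - 1) i * ((Pp ((j : ℤ) + 1) i - Pp ((j : ℤ)) i) / Δx) - ((Λp ((j : ℤ)) i - Λp ((j : ℤ) - 1) i) / Δx) * Pp ((j : ℤ) + 1) i) (fun i => Λm ((j : ℤ) + 1) i * ((Pm ((j : ℤ)) i - Pm ((j : ℤ)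 - 1) i) / Δx) + ((Λm ((j : ℤ) + 1) i - Λm ((j : ℤ)) i) / Δx) * Pm ((j : ℤ) - 1) i) *ᵥ W n ((j : ℤ)))) + (((∑ i, Λp ((J : ℤ) - 1) i * Pp (J : ℤ) i * (W n ((J : ℤ) - 1) (Sum.inl i) * W n ((J : ℤ) - 1) (Sum.inl i))) - (∑ i, Λm (J : ℤ) i * Pm ((J : ℤ) - 1) i * (W n ((J : ℤ)) (Sum.inr i) * W n ((J : ℤ)) (Sum.inr i)))) - ((∑ i, Λp (-1) i * Pp 0 i * (W n (-1) (Sum.inl i) * W n (-1) (Sum.inl i))) - (∑ i, Λm 0 i * Pm (-1) i * (W n (0) (Sum.inr i) * W n (0) (Sum.inr i)))))))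
      = Δx * (∑ j ∈ Finset.range J, W n ((j : ℤ)) ⬝ᵥ (blkdiag (Pp ((j : ℤ))) (Pm ((j : ℤ))) *ᵥ W n ((j : ℤ)))) - Δt * (Δx * (∑ j ∈ Finset.range J, W n ((j : ℤ)) ⬝ᵥ (blkdiag (fun i => -Λp ((j : ℤ) - 1) i * ((Pp ((j : ℤ) + 1) i - Pp ((j : ℤ)) i) / Δx) - ((Λp ((j : ℤ)) i - Λp ((j : ℤ) - 1) i) / Δx) * Pp ((j : ℤ) + 1) i) (fun i => Λm ((j : ℤ) + 1) i * ((Pm ((j : ℤ)) i - Pm ((j : ℤ) - 1) i) / Δx) + ((Λm ((j : ℤ) + 1) i - Λm ((j : ℤ)) i) / Δx) * Pm ((j : ℤ) - 1) i) *ᵥ W n ((j : ℤ))))) - Δt * (((∑ i, Λp ((J : ℤ) - 1) i * Pp (J : ℤ) i * (W n ((J : ℤ) - 1) (Sum.inl i) * W n ((J : ℤ) - 1) (Sum.inl i))) - (∑ i, Λm (J : ℤ) i * Pm ((J : ℤ) - 1) i * (W n ((J : ℤ)) (Sum.inr i) * W n ((J : ℤ)) (Sum.inr i)))) - ((∑ i,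 Λp (-1) i * Pp 0 i * (W n (-1) (Sum.inl i) * W n (-1) (Sum.inl i))) - (∑ i, Λm 0 i * Pm (-1) i * (W n (0) (Sum.inr i) * W n (0) (Sum.inr i))))) := by
    field_simp
    ring
  linarith [hm1, hm2,
    mul_le_mul_of_nonneg_left hm3 (mul_pos hΔt hΔx).le,
    mul_le_mul_of_nonneg_left hm4 hΔt.le]
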